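/- arXiv:2512.22000 — 3 statements merged into one kernel-verified Lean document; each statement's English description precedes it below -/
import Mathlib

section
/- Let F, Ψ, G : [1,T] × ℝ → ℝ be continuous functions satisfying Lipschitz conditions |F(x,u)−F(x,v)| ≤ c₁|u−v|, |Ψ(x,u)−Ψ(x,v)| ≤ c₂|u−v|, |G(x,u)−G(x,v)| ≤ c₃|u−v| and F(x,0)=Ψ(x,0)=G(x,0)=0. Define the operator (Dα)(x) = F(x,α(x)) + (ρ^{1−γ/k} Ψ(x,α(x))/(k Γ_k(γ))) ∫₁ˣ t^{ρ−1}(x^ρ−t^ρ)^{γ/k−1} G(t,α(t)) dt on continuous functions α : [1,T] → ℝ. If ‖α‖∞ ≤ r₀, then ‖Dα‖∞ ≤ c₁ r₀ + (c₂ c₃ r₀² ρ^{−γ/k} / (γ Γ_k(γ))) (T^ρ − 1)^{γ/k}. -/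
theorem stmt8 (ρ k γ T Γk c₁ c₂ c₃ r₀ : ℝ)
    (hρ : 0 < ρ) (hρ1 : ρ < 1) (hk : 0 < k) (hk1 : k < 1)
    (hγ : 0 < γ) (hγ1 : γ < 1) (hT : 1 < T) (hΓk : 0 < Γk)
    (hc₁ : 0 ≤ c₁) (hc₂ : 0 ≤ c₂) (hc₃ : 0 ≤ c₃) (hr₀ : 0 ≤ r₀)
    (F Ψ G : ℝ → ℝ → ℝ)
    (hFc : ContinuousOn (fun p : ℝ × ℝ => F p.1 p.2) (Set.Icc 1 T ×ˢ Set.univ))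
    (hΨc : ContinuousOn (fun p : ℝ × ℝ => Ψ p.1 p.2) (Set.Icc 1 T ×ˢ Set.univ))
    (hGc : ContinuousOn (fun p : ℝ × ℝ => G p.1 p.2) (Set.Icc 1 T ×ˢ Set.univ))
    (hFlip : ∀ x ∈ Set.Icc (1:ℝ) T, ∀ u v : ℝ, |F x u - F x v| ≤ c₁ * |u - v|)
    (hΨlip : ∀ x ∈ Set.Icc (1:ℝ) T, ∀ u v : ℝ, |Ψ x u - Ψ x v| ≤ c₂ * |u - v|)
    (hGlip : ∀ x ∈ Set.Icc (1:ℝ) T, ∀ u v : ℝ, |G x u - G x v| ≤ c₃ * |u - v|)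
    (hF0 : ∀ x ∈ Set.Icc (1:ℝ) T, F x 0 = 0)
    (hΨ0 : ∀ x ∈ Set.Icc (1:ℝ) T, Ψ x 0 = 0)
    (hG0 : ∀ x ∈ Set.Icc (1:ℝ) T, G x 0 = 0)
    (α : ℝ → ℝ) (hαc : ContinuousOn α (Set.Icc 1 T))
    (hα : ∀ x ∈ Set.Icc (1:ℝ) T, |α x| ≤ r₀)
    (D : (ℝ → ℝ) → ℝ → ℝ)
    (hD : ∀ (β : ℝ → ℝ) (x : ℝ), D β x =
      F x (β x) + (ρ ^ (1 - γ / k) * Ψ x (β x) / (k * Γk)) *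
        ∫ t in (1:ℝ)..x, t ^ (ρ - 1) * (x ^ ρ - t ^ ρ) ^ (γ / k - 1) * G t (β t)) :
    ∀ x ∈ Set.Icc (1:ℝ) T, |D α x| ≤
      c₁ * r₀ + (c₂ * c₃ * r₀ ^ 2 * ρ ^ (-(γ / k)) / (γ * Γk)) * (T ^ ρ - 1) ^ (γ / k) := by
  intro x hx
  obtain ⟨hx1, hxT⟩ := hx
  set q : ℝ := γ / k with hqdef
  have hq : 0 < q := div_pos hγ hk
  -- bounds on F, Ψ, G from Lipschitz + vanishing at 0
  have hxIcc : x ∈ Set.Icc (1:ℝ) T := ⟨hx1, hxT⟩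
  have bound : ∀ (H : ℝ → ℝ → ℝ) (c : ℝ),
      (∀ y ∈ Set.Icc (1:ℝ) T, ∀ u v : ℝ, |H y u - H y v| ≤ c * |u - v|) →
      (∀ y ∈ Set.Icc (1:ℝ) T, H y 0 = 0) →
      ∀ y ∈ Set.Icc (1:ℝ) T, |H y (α y)| ≤ c * r₀ := by
    intro H c hlip h0 y hy
    have := hlip y hy (α y) 0
    rw [h0 y hy, sub_zero, sub_zero] at this
    refine this.trans ?_
    have hc : 0 ≤ c := by
      have := hlip 1 ⟨le_refl 1, hT.le⟩ 1 0
      simp at this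
      nlinarith [abs_nonneg (H 1 1 - H 1 0)]
    exact mul_le_mul_of_nonneg_left (hα y hy) hc
  have hFb : |F x (α x)| ≤ c₁ * r₀ := bound F c₁ hFlip hF0 x hxIcc
  have hΨb : |Ψ x (α x)| ≤ c₂ * r₀ := bound Ψ c₂ hΨlip hΨ0 x hxIcc
  have hGb : ∀ t ∈ Set.Icc (1:ℝ) T, |G t (α t)| ≤ c₃ * r₀ := bound G c₃ hGlip hG0
  -- the singular weight f and its antiderivative g
  set f : ℝ → ℝ := fun t => t ^ (ρ - 1) * (x ^ ρ - t ^ ρ) ^ (q - 1) with hfdef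
  set g : ℝ → ℝ := fun t => -(k / (ρ * γ)) * (x ^ ρ - t ^ ρ) ^ q with hgdef
  have hgcont : ContinuousOn g (Set.Icc 1 x) := by
    apply ContinuousOn.mul continuousOn_const
    apply ContinuousOn.rpow_const
    · exact (continuousOn_const.sub (ContinuousOn.rpow_const continuousOn_id
        (fun t ht => Or.inl (by have := ht.1; positivity))))
    · intro t ht; exact Or.inr hq.le
  have hderiv : ∀ t ∈ Set.Ioo (1:ℝ) x, HasDerivAt g (f t) t := by
    intro t ht
    have ht0 : (0:ℝ) < t := lt_trans one_pos ht.1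
    have htx : t ^ ρ < x ^ ρ := Real.rpow_lt_rpow ht0.le ht.2 hρ
    have hv : 0 < x ^ ρ - t ^ ρ := sub_pos.2 htx
    have h1 : HasDerivAt (fun s : ℝ => x ^ ρ - s ^ ρ) (-(ρ * t ^ (ρ - 1))) t := by
      simpa using (Real.hasDerivAt_rpow_const (p := ρ) (Or.inl ht0.ne')).const_sub (x ^ ρ)
    have h2 : HasDerivAt (fun u : ℝ => u ^ q) (q * (x ^ ρ - t ^ ρ) ^ (q - 1)) (x ^ ρ - t ^ ρ) :=
      Real.hasDerivAt_rpow_const (Or.inl hv.ne')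
    have h3 := (h2.comp t h1).const_mul (-(k / (ρ * γ)))
    have hc : k / (ρ * γ) * q * ρ = 1 := by
      rw [hqdef]; field_simp
    convert h3 using 1
    show t ^ (ρ - 1) * (x ^ ρ - t ^ ρ) ^ (q - 1) = _
    rw [show -(k / (ρ * γ)) * (q * (x ^ ρ - t ^ ρ) ^ (q - 1) * -(ρ * t ^ (ρ - 1))) =
      (k / (ρ * γ) * q * ρ) * (t ^ (ρ - 1) * (x ^ ρ - t ^ ρ) ^ (q - 1)) from by ring, hc, one_mul]
    all_goals rfl
  have hfpos : ∀ t ∈ Set.Ioo (1:ℝ) x, 0 ≤ f t := by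
    intro t ht
    have ht0 : (0:ℝ) ≤ t := le_trans zero_le_one ht.1.le
    exact mul_nonneg (Real.rpow_nonneg ht0 _)
      (Real.rpow_nonneg (sub_nonneg.2 (Real.rpow_le_rpow ht0 ht.2.le hρ.le)) _)
  have hfint : IntervalIntegrable f MeasureTheory.volume 1 x := by
    apply intervalIntegral.intervalIntegrable_deriv_of_nonneg (g := g)
    · rwa [Set.uIcc_of_le hx1]
    · rwa [min_eq_left hx1, max_eq_right hx1]
    · rwa [min_eq_left hx1, max_eq_right hx1]
  have hval : ∫ t in (1:ℝ)..x, f t = (k / (ρ * γ)) * (x ^ ρ - 1) ^ q := by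
    rw [intervalIntegral.integral_eq_sub_of_hasDeriv_right_of_le hx1 hgcont
      (fun t ht => (hderiv t ht).hasDerivWithinAt) hfint]
    simp only [hgdef, sub_self, Real.zero_rpow hq.ne', Real.one_rpow]
    ring
  -- continuity and bound on h t = G t (α t)
  set h : ℝ → ℝ := fun t => G t (α t) with hhdef
  have hhc : ContinuousOn h (Set.Icc 1 T) := by
    apply hGc.comp (continuousOn_id.prodMk hαc)
    intro t ht; exact ⟨ht, Set.mem_univ _⟩
  have hsub : Set.Icc (1:ℝ) x ⊆ Set.Icc 1 T := Set.Icc_subset_Icc le_rfl hxT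
  -- integrability of the full integrand
  have hIint : IntervalIntegrable (fun t => f t * h t) MeasureTheory.volume 1 x := by
    have : IntervalIntegrable (fun t => h t * f t) MeasureTheory.volume 1 x := by
      rw [intervalIntegrable_iff_integrableOn_Ioc_of_le hx1] at hfint ⊢
      apply hfint.bdd_mul (c := c₃ * r₀)
      · exact ((hhc.mono (Set.Ioc_subset_Icc_self.trans hsub)).aestronglyMeasurable
          measurableSet_Ioc)
      · filter_upwards [MeasureTheory.ae_restrict_mem measurableSet_Ioc] with t ht
        exact (Real.norm_eq_abs _).le.trans_eq' rfl |>.trans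
          (hGb t (hsub (Set.Ioc_subset_Icc_self ht)))
    simpa [mul_comm] using this
  -- bound the integral
  have hintbound : |∫ t in (1:ℝ)..x, f t * h t| ≤ (c₃ * r₀) * ((k / (ρ * γ)) * (x ^ ρ - 1) ^ q) := by
    have hb : |∫ t in (1:ℝ)..x, f t * h t| ≤ |∫ t in (1:ℝ)..x, (c₃ * r₀) * f t| := by
      rw [← Real.norm_eq_abs]
      apply intervalIntegral.norm_integral_le_abs_of_norm_le ?_ (hfint.const_mul (c₃ * r₀))
      rw [Set.uIoc_of_le hx1]
      filter_upwards [MeasureTheory.ae_restrict_mem measurableSet_Ioc] with t ht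
      have ht' : t ∈ Set.Ioo (1:ℝ) x ∪ {x} := by
        rcases eq_or_lt_of_le ht.2 with h | h
        · exact Or.inr (by simp [h])
        · exact Or.inl ⟨ht.1, h⟩
      have hfnn : 0 ≤ f t := by
        rcases ht' with h | h
        · exact hfpos t h
        · simp at h; subst h
          exact mul_nonneg (Real.rpow_nonneg (by linarith [ht.1]) _)
            (Real.rpow_nonneg (by simp) _)
      rw [Real.norm_eq_abs, abs_mul, abs_of_nonneg hfnn]
      calc f t * |h t| ≤ f t * (c₃ * r₀) :=
            mul_le_mul_of_nonneg_left (hGb t (hsub ⟨ht.1.le, ht.2⟩)) hfnn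
        _ = (c₃ * r₀) * f t := mul_comm _ _
    rw [intervalIntegral.integral_const_mul, hval] at hb
    refine hb.trans (le_of_eq (abs_of_nonneg ?_))
    have h1x : (1:ℝ) ≤ x ^ ρ := Real.one_le_rpow hx1 hρ.le
    have : (0:ℝ) ≤ x ^ ρ - 1 := by linarith
    positivity
  -- put it together
  rw [hD]
  have habs : |F x (α x) + (ρ ^ (1 - q) * Ψ x (α x) / (k * Γk)) *
      ∫ t in (1:ℝ)..x, f t * h t| ≤
      c₁ * r₀ + (ρ ^ (1 - q) * (c₂ * r₀) / (k * Γk)) *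
        ((c₃ * r₀) * ((k / (ρ * γ)) * (x ^ ρ - 1) ^ q)) := by
    refine (abs_add_le _ _).trans (add_le_add hFb ?_)
    rw [abs_mul, abs_div, abs_mul]
    have hρpow : 0 < ρ ^ (1 - q) := Real.rpow_pos_of_pos hρ _
    rw [abs_of_pos hρpow, abs_of_pos (mul_pos hk hΓk)]
    apply mul_le_mul _ hintbound (abs_nonneg _)
    · positivity
    · gcongr
  refine habs.trans ?_
  -- compare (x^ρ - 1)^q with (T^ρ - 1)^q and simplify constants
  have hxρ1 : (1:ℝ) ≤ x ^ ρ := Real.one_le_rpow hx1 hρ.le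
  have hmono : (x ^ ρ - 1) ^ q ≤ (T ^ ρ - 1) ^ q :=
    Real.rpow_le_rpow (by linarith)
      (sub_le_sub_right (Real.rpow_le_rpow (by linarith) hxT hρ.le) 1) hq.le
  have hcoef : 0 ≤ ρ ^ (1 - q) * (c₂ * r₀) / (k * Γk) * ((c₃ * r₀) * (k / (ρ * γ))) := by
    positivity
  have step : ρ ^ (1 - q) * (c₂ * r₀) / (k * Γk) *
      ((c₃ * r₀) * ((k / (ρ * γ)) * (x ^ ρ - 1) ^ q)) ≤
      ρ ^ (1 - q) * (c₂ * r₀) / (k * Γk) *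
      ((c₃ * r₀) * ((k / (ρ * γ)) * (T ^ ρ - 1) ^ q)) := by
    have := mul_le_mul_of_nonneg_left hmono hcoef
    calc ρ ^ (1 - q) * (c₂ * r₀) / (k * Γk) * ((c₃ * r₀) * ((k / (ρ * γ)) * (x ^ ρ - 1) ^ q))
        = ρ ^ (1 - q) * (c₂ * r₀) / (k * Γk) * ((c₃ * r₀) * (k / (ρ * γ))) * (x ^ ρ - 1) ^ q := by
          ring
      _ ≤ ρ ^ (1 - q) * (c₂ * r₀) / (k * Γk) * ((c₃ * r₀) * (k / (ρ * γ))) * (T ^ ρ - 1) ^ q :=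
          this
      _ = ρ ^ (1 - q) * (c₂ * r₀) / (k * Γk) * ((c₃ * r₀) * ((k / (ρ * γ)) * (T ^ ρ - 1) ^ q)) := by
          ring
  refine (add_le_add_right step _).trans ?_
  have hρsplit : ρ ^ (1 - q) = ρ * ρ ^ (-q) := by
    rw [show (1 - q) = 1 + -q by ring, Real.rpow_add hρ, Real.rpow_one]
  apply le_of_eq
  rw [hρsplit]
  field_simp
end

section
/- Under the hypotheses of the previous statement, if additionally c₁ + (c₂c₃ r₀ ρ^{−γ/k}/(γΓ_k(γ)))(T^ρ−1)^{γ/k} ≤ 1, then the operator D maps the closed ball {α ∈ C([1,T]) : ‖α‖∞ ≤ r₀} into itself. -/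
open Real MeasureTheory intervalIntegral Set

/-- lower bound `x^ρ - t^ρ ≥ ρ x^(ρ-1) (x - t)` on `[1,x]` for `0 < ρ < 1`. -/
lemma aux_rpow_lb (ρ x : ℝ) (hρ : 0 < ρ) (hρ1 : ρ < 1) (hx : 1 ≤ x) :
    ∀ t ∈ Set.Icc (1:ℝ) x, ρ * x ^ (ρ - 1) * (x - t) ≤ x ^ ρ - t ^ ρ := by
  intro t ht
  set φ : ℝ → ℝ := fun t => x ^ ρ - t ^ ρ - ρ * x ^ (ρ - 1) * (x - t) with hφ
  have key : AntitoneOn φ (Set.Icc 1 x) := by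
    have hderiv : ∀ s ∈ Set.Ioo (1:ℝ) x,
        HasDerivAt φ (-(ρ * s ^ (ρ - 1)) + ρ * x ^ (ρ - 1)) s := by
      intro s hs
      have h1 : HasDerivAt (fun t : ℝ => x ^ ρ - t ^ ρ) (-(ρ * s ^ (ρ - 1))) s :=
        (Real.hasDerivAt_rpow_const (Or.inl (by linarith [hs.1] : s ≠ 0))).const_sub _
      have h2 : HasDerivAt (fun t : ℝ => ρ * x ^ (ρ - 1) * (x - t))
          (ρ * x ^ (ρ - 1) * (-1)) s := by
        simpa using ((hasDerivAt_id s).const_sub x).const_mul (ρ * x ^ (ρ - 1))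
      have := h1.sub h2
      exact this.congr_deriv (by ring)
    apply antitoneOn_of_deriv_nonpos (convex_Icc 1 x)
    · apply ContinuousOn.sub (ContinuousOn.sub continuousOn_const ?_) (continuousOn_const.mul ?_)
      · exact ContinuousOn.rpow_const continuousOn_id
          (fun t ht => Or.inl (by intro h; have h' : t = 0 := h; subst h'; exact absurd ht.1 (by norm_num)))
      · exact continuousOn_const.sub continuousOn_id
    · intro s hs
      rw [interior_Icc] at hs
      exact (hderiv s hs).differentiableAt.differentiableWithinAt
    · intro s hs
      rw [interior_Icc] at hs
      rw [(hderiv s hs).deriv]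
      have : x ^ (ρ - 1) ≤ s ^ (ρ - 1) :=
        Real.rpow_le_rpow_of_nonpos (by linarith [hs.1]) hs.2.le (by linarith)
      nlinarith
  have := key ht (Set.right_mem_Icc.2 (le_trans ht.1 ht.2)) ht.2
  simp only [hφ] at this
  linarith

/-- integrability of the singular kernel. -/
lemma aux_integrable (ρ x c : ℝ) (hρ : 0 < ρ) (hρ1 : ρ < 1) (hx : 1 ≤ x) (hc : -1 < c) :
    IntervalIntegrable (fun t => t ^ (ρ - 1) * (x ^ ρ - t ^ ρ) ^ c) volume 1 x := by
  rw [intervalIntegrable_iff_integrableOn_Ioo_of_le hx]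
  have hmeas : AEStronglyMeasurable (fun t : ℝ => t ^ (ρ - 1) * (x ^ ρ - t ^ ρ) ^ c)
      (volume.restrict (Set.Ioo 1 x)) := by
    apply ContinuousOn.aestronglyMeasurable _ measurableSet_Ioo
    apply ContinuousOn.mul
    · exact ContinuousOn.rpow_const continuousOn_id
        (fun t ht => Or.inl (by intro h; have h' : t = 0 := h; subst h'; exact absurd ht.1 (by norm_num)))
    · apply ContinuousOn.rpow_const (continuousOn_const.sub
        (ContinuousOn.rpow_const continuousOn_id
          (fun t ht => Or.inl (by intro h; have h' : t = 0 := h; subst h'; exact absurd ht.1 (by norm_num)))))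
      intro t ht
      left
      have h1 : (0:ℝ) < t := lt_trans one_pos ht.1
      have : t ^ ρ < x ^ ρ := Real.rpow_lt_rpow (by linarith) ht.2 hρ
      simp only [id]
      intro h
      have : x ^ ρ - t ^ ρ = 0 := h
      linarith
  rcases lt_or_ge c 0 with hcneg | hcpos
  · -- singular case: dominate by (ρ x^(ρ-1))^c (x - t)^c
    have hxp : (0:ℝ) < ρ * x ^ (ρ - 1) :=
      mul_pos hρ (Real.rpow_pos_of_pos (by linarith) _)
    apply MeasureTheory.Integrable.mono'
      (g := fun t => (ρ * x ^ (ρ - 1)) ^ c * (x - t) ^ c) ?_ hmeas ?_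
    · -- integrability of the dominating function
      have h1 : IntervalIntegrable (fun t : ℝ => (x - t) ^ c) volume 1 x := by
        simpa using (intervalIntegrable_rpow' (a := x - 1) (b := x - x) hc).comp_sub_left x
      have h2 := (h1.const_mul ((ρ * x ^ (ρ - 1)) ^ c))
      rw [intervalIntegrable_iff_integrableOn_Ioo_of_le hx] at h2
      exact h2
    · filter_upwards [ae_restrict_mem measurableSet_Ioo] with t ht
      have h1 : (0:ℝ) < t := lt_trans one_pos ht.1
      have hbase : (0:ℝ) ≤ x ^ ρ - t ^ ρ := by
        have : t ^ ρ ≤ x ^ ρ := Real.rpow_le_rpow (by linarith) ht.2.le hρ.le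
        linarith
      have hfnonneg : (0:ℝ) ≤ t ^ (ρ - 1) * (x ^ ρ - t ^ ρ) ^ c :=
        mul_nonneg (Real.rpow_nonneg h1.le _) (Real.rpow_nonneg hbase _)
      rw [Real.norm_eq_abs, abs_of_nonneg hfnonneg]
      have ht1 : t ^ (ρ - 1) ≤ 1 := by
        have := Real.rpow_le_rpow_of_nonpos one_pos ht.1.le (by linarith : ρ - 1 ≤ 0)
        simpa using this
      have hlb : ρ * x ^ (ρ - 1) * (x - t) ≤ x ^ ρ - t ^ ρ :=
        aux_rpow_lb ρ x hρ hρ1 hx t ⟨ht.1.le, ht.2.le⟩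
      have hlbpos : (0:ℝ) < ρ * x ^ (ρ - 1) * (x - t) :=
        mul_pos hxp (by linarith [ht.2])
      have h2 : (x ^ ρ - t ^ ρ) ^ c ≤ (ρ * x ^ (ρ - 1) * (x - t)) ^ c :=
        Real.rpow_le_rpow_of_nonpos hlbpos hlb hcneg.le
      have h3 : (ρ * x ^ (ρ - 1) * (x - t)) ^ c = (ρ * x ^ (ρ - 1)) ^ c * (x - t) ^ c :=
        Real.mul_rpow hxp.le (by linarith [ht.2])
      calc t ^ (ρ - 1) * (x ^ ρ - t ^ ρ) ^ c
          ≤ 1 * (ρ * x ^ (ρ - 1) * (x - t)) ^ c := by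
            apply mul_le_mul ht1 h2 (Real.rpow_nonneg hbase _) zero_le_one
        _ = (ρ * x ^ (ρ - 1)) ^ c * (x - t) ^ c := by rw [one_mul, h3]
  · -- bounded case: dominate by constant
    apply MeasureTheory.Integrable.mono'
      (g := fun _ => (x ^ ρ - 1) ^ c) (integrableOn_const measure_Ioo_lt_top.ne enorm_ne_top)
      hmeas ?_
    filter_upwards [ae_restrict_mem measurableSet_Ioo] with t ht
    have h1 : (0:ℝ) < t := lt_trans one_pos ht.1
    have hbase : (0:ℝ) ≤ x ^ ρ - t ^ ρ := by
      have : t ^ ρ ≤ x ^ ρ := Real.rpow_le_rpow (by linarith) ht.2.le hρ.le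
      linarith
    have hfnonneg : (0:ℝ) ≤ t ^ (ρ - 1) * (x ^ ρ - t ^ ρ) ^ c :=
      mul_nonneg (Real.rpow_nonneg h1.le _) (Real.rpow_nonneg hbase _)
    rw [Real.norm_eq_abs, abs_of_nonneg hfnonneg]
    have ht1 : t ^ (ρ - 1) ≤ 1 := by
      have := Real.rpow_le_rpow_of_nonpos one_pos ht.1.le (by linarith : ρ - 1 ≤ 0)
      simpa using this
    have htρ : (1:ℝ) ≤ t ^ ρ := Real.one_le_rpow ht.1.le hρ.le
    have h2 : (x ^ ρ - t ^ ρ) ^ c ≤ (x ^ ρ - 1) ^ c :=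
      Real.rpow_le_rpow hbase (by linarith) hcpos
    calc t ^ (ρ - 1) * (x ^ ρ - t ^ ρ) ^ c ≤ 1 * (x ^ ρ - 1) ^ c :=
          mul_le_mul ht1 h2 (Real.rpow_nonneg hbase _) zero_le_one
      _ = (x ^ ρ - 1) ^ c := one_mul _

/-- value of the integral. -/
lemma aux_value (ρ x c : ℝ) (hρ : 0 < ρ) (hρ1 : ρ < 1) (hx : 1 ≤ x) (hc : -1 < c) :
    ∫ t in (1:ℝ)..x, t ^ (ρ - 1) * (x ^ ρ - t ^ ρ) ^ c
      = (x ^ ρ - 1) ^ (c + 1) / (ρ * (c + 1)) := by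
  have hc1 : (0:ℝ) < c + 1 := by linarith
  set H : ℝ → ℝ := fun t => -((x ^ ρ - t ^ ρ) ^ (c + 1)) / (ρ * (c + 1)) with hH
  have hcont : ContinuousOn H (Set.Icc 1 x) := by
    apply ContinuousOn.div_const
    apply ContinuousOn.neg
    apply ContinuousOn.rpow_const (continuousOn_const.sub
      (ContinuousOn.rpow_const continuousOn_id
        (fun t ht => Or.inl (by intro h; have h' : t = 0 := h; subst h'; exact absurd ht.1 (by norm_num)))))
    exact fun t _ => Or.inr hc1.le
  have hderiv : ∀ t ∈ Set.Ioo (1:ℝ) x,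
      HasDerivAt H (t ^ (ρ - 1) * (x ^ ρ - t ^ ρ) ^ c) t := by
    intro t ht
    have h1 : (0:ℝ) < t := lt_trans one_pos ht.1
    have hbpos : (0:ℝ) < x ^ ρ - t ^ ρ := by
      have : t ^ ρ < x ^ ρ := Real.rpow_lt_rpow h1.le ht.2 hρ
      linarith
    have hin : HasDerivAt (fun t : ℝ => x ^ ρ - t ^ ρ) (-(ρ * t ^ (ρ - 1))) t :=
      (Real.hasDerivAt_rpow_const (Or.inl h1.ne')).const_sub _
    have hout := hin.rpow_const (p := c + 1) (Or.inl hbpos.ne')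
    have := (hout.neg).div_const (ρ * (c + 1))
    refine this.congr_deriv ?_
    have : c + 1 - 1 = c := by ring
    rw [this]
    field_simp
  rw [intervalIntegral.integral_eq_sub_of_hasDerivAt_of_le hx hcont hderiv
    (aux_integrable ρ x c hρ hρ1 hx hc)]
  have hxx : x ^ ρ - x ^ ρ = 0 := sub_self _
  simp only [hH, hxx, Real.one_rpow, Real.zero_rpow hc1.ne']
  field_simp
  ring

theorem stmt9 (ρ k γ T Γk c₁ c₂ c₃ r₀ : ℝ)
    (hρ : 0 < ρ) (hρ1 : ρ < 1) (hk : 0 < k) (hk1 : k < 1)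
    (hγ : 0 < γ) (hγ1 : γ < 1) (hT : 1 < T) (hΓk : 0 < Γk)
    (hc₁ : 0 ≤ c₁) (hc₂ : 0 ≤ c₂) (hc₃ : 0 ≤ c₃) (hr₀ : 0 ≤ r₀)
    (F Ψ G : ℝ → ℝ → ℝ)
    (hFc : ContinuousOn (fun p : ℝ × ℝ => F p.1 p.2) (Set.Icc 1 T ×ˢ Set.univ))
    (hΨc : ContinuousOn (fun p : ℝ × ℝ => Ψ p.1 p.2) (Set.Icc 1 T ×ˢ Set.univ))
    (hGc : ContinuousOn (fun p : ℝ × ℝ => G p.1 p.2) (Set.Icc 1 T ×ˢ Set.univ))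
    (hFlip : ∀ x ∈ Set.Icc (1:ℝ) T, ∀ u v : ℝ, |F x u - F x v| ≤ c₁ * |u - v|)
    (hΨlip : ∀ x ∈ Set.Icc (1:ℝ) T, ∀ u v : ℝ, |Ψ x u - Ψ x v| ≤ c₂ * |u - v|)
    (hGlip : ∀ x ∈ Set.Icc (1:ℝ) T, ∀ u v : ℝ, |G x u - G x v| ≤ c₃ * |u - v|)
    (hF0 : ∀ x ∈ Set.Icc (1:ℝ) T, F x 0 = 0)
    (hΨ0 : ∀ x ∈ Set.Icc (1:ℝ) T, Ψ x 0 = 0)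
    (hG0 : ∀ x ∈ Set.Icc (1:ℝ) T, G x 0 = 0)
    (α : ℝ → ℝ) (hαc : ContinuousOn α (Set.Icc 1 T))
    (hα : ∀ x ∈ Set.Icc (1:ℝ) T, |α x| ≤ r₀)
    (D : (ℝ → ℝ) → ℝ → ℝ)
    (hD : ∀ (β : ℝ → ℝ) (x : ℝ), D β x =
      F x (β x) + (ρ ^ (1 - γ / k) * Ψ x (β x) / (k * Γk)) *
        ∫ t in (1:ℝ)..x, t ^ (ρ - 1) * (x ^ ρ - t ^ ρ) ^ (γ / k - 1) * G t (β t))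
    (hcontr : c₁ + (c₂ * c₃ * r₀ * ρ ^ (-(γ / k)) / (γ * Γk)) * (T ^ ρ - 1) ^ (γ / k) ≤ 1) :
    ∀ x ∈ Set.Icc (1:ℝ) T, |D α x| ≤ r₀ := by
  intro x hx
  obtain ⟨hx1, hxT⟩ := hx
  have hγk : (0:ℝ) < γ / k := div_pos hγ hk
  have hc : (-1:ℝ) < γ / k - 1 := by linarith
  have hck : γ / k - 1 + 1 = γ / k := by ring
  -- bound on F
  have hF : |F x (α x)| ≤ c₁ * r₀ := by
    have := hFlip x ⟨hx1, hxT⟩ (α x) 0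
    rw [hF0 x ⟨hx1, hxT⟩, sub_zero, sub_zero] at this
    exact this.trans (mul_le_mul_of_nonneg_left (hα x ⟨hx1, hxT⟩) hc₁)
  -- bound on Ψ
  have hΨ : |Ψ x (α x)| ≤ c₂ * r₀ := by
    have := hΨlip x ⟨hx1, hxT⟩ (α x) 0
    rw [hΨ0 x ⟨hx1, hxT⟩, sub_zero, sub_zero] at this
    exact this.trans (mul_le_mul_of_nonneg_left (hα x ⟨hx1, hxT⟩) hc₂)
  -- bound on the integral
  set V : ℝ := (x ^ ρ - 1) ^ (γ / k) / (ρ * (γ / k)) with hV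
  have hVnonneg : 0 ≤ V := by
    apply div_nonneg (Real.rpow_nonneg ?_ _) (by positivity)
    have : (1:ℝ) ≤ x ^ ρ := Real.one_le_rpow hx1 hρ.le
    linarith
  have hsint := aux_integrable ρ x (γ / k - 1) hρ hρ1 hx1 hc
  have hsval : ∫ t in (1:ℝ)..x, t ^ (ρ - 1) * (x ^ ρ - t ^ ρ) ^ (γ / k - 1) = V := by
    rw [aux_value ρ x (γ / k - 1) hρ hρ1 hx1 hc, hck]
  have hI : |∫ t in (1:ℝ)..x, t ^ (ρ - 1) * (x ^ ρ - t ^ ρ) ^ (γ / k - 1) * G t (α t)|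
      ≤ c₃ * r₀ * V := by
    have hgint : IntervalIntegrable
        (fun t => t ^ (ρ - 1) * (x ^ ρ - t ^ ρ) ^ (γ / k - 1) * (c₃ * r₀)) volume 1 x :=
      hsint.mul_const _
    have hbound := intervalIntegral.norm_integral_le_abs_of_norm_le
      (f := fun t => t ^ (ρ - 1) * (x ^ ρ - t ^ ρ) ^ (γ / k - 1) * G t (α t))
      (g := fun t => t ^ (ρ - 1) * (x ^ ρ - t ^ ρ) ^ (γ / k - 1) * (c₃ * r₀))
      (μ := volume) (a := 1) (b := x) ?_ hgint
    · have hval2 : ∫ t in (1:ℝ)..x,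
          t ^ (ρ - 1) * (x ^ ρ - t ^ ρ) ^ (γ / k - 1) * (c₃ * r₀) = V * (c₃ * r₀) := by
        rw [intervalIntegral.integral_mul_const, hsval]
      rw [Real.norm_eq_abs] at hbound
      rw [hval2] at hbound
      calc |∫ t in (1:ℝ)..x, t ^ (ρ - 1) * (x ^ ρ - t ^ ρ) ^ (γ / k - 1) * G t (α t)|
          ≤ |V * (c₃ * r₀)| := hbound
        _ = c₃ * r₀ * V := by
            rw [abs_of_nonneg (by positivity)]; ring
    · filter_upwards [ae_restrict_mem measurableSet_uIoc] with t ht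
      rw [Set.uIoc_of_le hx1] at ht
      have h1 : (0:ℝ) < t := lt_trans one_pos ht.1
      have htT : t ∈ Set.Icc (1:ℝ) T := ⟨ht.1.le, ht.2.trans hxT⟩
      have hbase : (0:ℝ) ≤ x ^ ρ - t ^ ρ := by
        have : t ^ ρ ≤ x ^ ρ := Real.rpow_le_rpow h1.le ht.2 hρ.le
        linarith
      have hs0 : (0:ℝ) ≤ t ^ (ρ - 1) * (x ^ ρ - t ^ ρ) ^ (γ / k - 1) :=
        mul_nonneg (Real.rpow_nonneg h1.le _) (Real.rpow_nonneg hbase _)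
      have hG : |G t (α t)| ≤ c₃ * r₀ := by
        have := hGlip t htT (α t) 0
        rw [hG0 t htT, sub_zero, sub_zero] at this
        exact this.trans (mul_le_mul_of_nonneg_left (hα t htT) hc₃)
      rw [Real.norm_eq_abs, abs_mul, abs_of_nonneg hs0]
      exact mul_le_mul_of_nonneg_left hG hs0
  -- put everything together
  rw [hD]
  have hcoef : |ρ ^ (1 - γ / k) * Ψ x (α x) / (k * Γk)|
      ≤ ρ ^ (1 - γ / k) * (c₂ * r₀) / (k * Γk) := by
    rw [abs_div, abs_mul, abs_of_pos (Real.rpow_pos_of_pos hρ _),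
      abs_of_pos (mul_pos hk hΓk)]
    apply div_le_div_of_nonneg_right _ (mul_pos hk hΓk).le
    exact mul_le_mul_of_nonneg_left hΨ (Real.rpow_pos_of_pos hρ _).le
  have key : |D α x| ≤ c₁ * r₀ + ρ ^ (1 - γ / k) * (c₂ * r₀) / (k * Γk) * (c₃ * r₀ * V) := by
    rw [hD]
    calc |F x (α x) + ρ ^ (1 - γ / k) * Ψ x (α x) / (k * Γk) *
          ∫ t in (1:ℝ)..x, t ^ (ρ - 1) * (x ^ ρ - t ^ ρ) ^ (γ / k - 1) * G t (α t)|
        ≤ |F x (α x)| + |ρ ^ (1 - γ / k) * Ψ x (α x) / (k * Γk)| *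
          |∫ t in (1:ℝ)..x, t ^ (ρ - 1) * (x ^ ρ - t ^ ρ) ^ (γ / k - 1) * G t (α t)| := by
          rw [← abs_mul]; exact abs_add_le _ _
      _ ≤ c₁ * r₀ + ρ ^ (1 - γ / k) * (c₂ * r₀) / (k * Γk) * (c₃ * r₀ * V) := by
          apply add_le_add hF
          apply mul_le_mul hcoef hI (abs_nonneg _)
          positivity
  rw [← hD]
  -- simplify the coefficient and bound V by the T-version
  have hrexp : ρ ^ (1 - γ / k) = ρ * ρ ^ (-(γ / k)) := by
    rw [show (1 : ℝ) - γ / k = 1 + -(γ / k) by ring, Real.rpow_add hρ, Real.rpow_one]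
  have hVT : (x ^ ρ - 1) ^ (γ / k) ≤ (T ^ ρ - 1) ^ (γ / k) := by
    apply Real.rpow_le_rpow
    · have : (1:ℝ) ≤ x ^ ρ := Real.one_le_rpow hx1 hρ.le
      linarith
    · have : x ^ ρ ≤ T ^ ρ := Real.rpow_le_rpow (by linarith) hxT hρ.le
      linarith
    · exact hγk.le
  have hcoefeq : ρ ^ (1 - γ / k) * (c₂ * r₀) / (k * Γk) * (c₃ * r₀ * V)
      = (c₂ * c₃ * r₀ * ρ ^ (-(γ / k)) / (γ * Γk)) * (x ^ ρ - 1) ^ (γ / k) * r₀ := by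
    rw [hV, hrexp]
    field_simp
  have hmono : (c₂ * c₃ * r₀ * ρ ^ (-(γ / k)) / (γ * Γk)) * (x ^ ρ - 1) ^ (γ / k) * r₀
      ≤ (c₂ * c₃ * r₀ * ρ ^ (-(γ / k)) / (γ * Γk)) * (T ^ ρ - 1) ^ (γ / k) * r₀ := by
    apply mul_le_mul_of_nonneg_right _ hr₀
    apply mul_le_mul_of_nonneg_left hVT
    positivity
  have hfinal : c₁ * r₀ + (c₂ * c₃ * r₀ * ρ ^ (-(γ / k)) / (γ * Γk)) *
      (T ^ ρ - 1) ^ (γ / k) * r₀ ≤ r₀ := by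
    have := mul_le_mul_of_nonneg_right hcontr hr₀
    rw [one_mul] at this
    nlinarith
  calc |D α x| ≤ c₁ * r₀ + ρ ^ (1 - γ / k) * (c₂ * r₀) / (k * Γk) * (c₃ * r₀ * V) := key
    _ = c₁ * r₀ + (c₂ * c₃ * r₀ * ρ ^ (-(γ / k)) / (γ * Γk)) * (x ^ ρ - 1) ^ (γ / k) * r₀ := by
        rw [hcoefeq]
    _ ≤ c₁ * r₀ + (c₂ * c₃ * r₀ * ρ ^ (-(γ / k)) / (γ * Γk)) * (T ^ ρ - 1) ^ (γ / k) * r₀ := by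
        linarith [hmono]
    _ ≤ r₀ := hfinal
end

section
/- Let (aₚ) be a sequence of positive reals and let υ : ℝ≥0 → ℝ≥0 be continuous, nondecreasing with υ(σ)=0 iff σ=0, and γ : ℝ≥0 → ℝ≥0 with γ(0)=0 and γ(θ)>0 for θ>0 and γ lower semicontinuous. If υ(a_{p+1}) ≤ υ(aₚ) − γ(aₚ) for all p, then υ(aₚ) → 0, and consequently aₚ → 0. -/
open Filter Topology

theorem stmt16 (a : ℕ → ℝ) (ha : ∀ p, 0 < a p)
    (υ : ℝ → ℝ) (hυnn : ∀ σ, 0 ≤ σ → 0 ≤ υ σ) (hυc : Continuous υ)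
    (hυmono : Monotone υ) (hυ0 : ∀ σ, 0 ≤ σ → (υ σ = 0 ↔ σ = 0))
    (γ : ℝ → ℝ) (hγnn : ∀ θ, 0 ≤ θ → 0 ≤ γ θ) (hγ0 : γ 0 = 0)
    (hγpos : ∀ θ, 0 < θ → 0 < γ θ) (hγlsc : LowerSemicontinuous γ)
    (hrec : ∀ p, υ (a (p + 1)) ≤ υ (a p) - γ (a p)) :
    Tendsto (fun p => υ (a p)) atTop (𝓝 0) ∧ Tendsto a atTop (𝓝 0) := by
  have hanti : Antitone fun p => υ (a p) := antitone_nat_of_succ_le fun p => by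
    have := hrec p
    have := hγnn (a p) (ha p).le
    linarith
  have hbdd : BddBelow (Set.range fun p => υ (a p)) := by
    refine ⟨0, fun x hx => ?_⟩
    obtain ⟨p, rfl⟩ := hx
    exact hυnn _ (ha p).le
  set ϖ := ⨅ p, υ (a p) with hϖdef
  have hconv : Tendsto (fun p => υ (a p)) atTop (𝓝 ϖ) := tendsto_atTop_ciInf hanti hbdd
  have hϖle : ∀ p, ϖ ≤ υ (a p) := fun p => ciInf_le hbdd p
  have hϖ0 : 0 ≤ ϖ := le_ciInf fun p => hυnn _ (ha p).le
  have hγto0 : Tendsto (fun p => γ (a p)) atTop (𝓝 0) := by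
    have h1 : Tendsto (fun p => υ (a p) - υ (a (p + 1))) atTop (𝓝 (ϖ - ϖ)) :=
      hconv.sub (hconv.comp (tendsto_add_atTop_nat 1))
    rw [sub_self] at h1
    refine squeeze_zero (fun p => hγnn _ (ha p).le) (fun p => ?_) h1
    have := hrec p
    linarith
  have haup : ∀ p, a p ≤ a 0 := by
    intro p
    cases p with
    | zero => exact le_rfl
    | succ q =>
      by_contra h
      push_neg at h
      have h1 : υ (a 0) ≤ υ (a (q + 1)) := hυmono h.le
      have h2 : υ (a (q + 1)) ≤ υ (a 1) := hanti (Nat.succ_le_succ (Nat.zero_le q))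
      have h3 := hrec 0
      have h4 := hγpos (a 0) (ha 0)
      linarith
  have hϖeq : ϖ = 0 := by
    by_contra h
    have hϖpos : 0 < ϖ := hϖ0.lt_of_ne (Ne.symm h)
    obtain ⟨δ, hδpos, hδ⟩ := Metric.continuous_iff.mp hυc 0 ϖ hϖpos
    have hυ0eq : υ 0 = 0 := (hυ0 0 le_rfl).mpr rfl
    have hδ2 : υ (δ / 2) < ϖ := by
      have := hδ (δ / 2) (by rw [Real.dist_eq]; rw [sub_zero, abs_of_pos (half_pos hδpos)]; linarith)
      rw [hυ0eq, Real.dist_eq, sub_zero] at this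
      exact (le_abs_self _).trans_lt this
    have halow : ∀ p, δ / 2 ≤ a p := by
      intro p
      by_contra hc
      push_neg at hc
      have := hυmono hc.le
      have := hϖle p
      linarith
    obtain ⟨x, hxK, φ, hφ, hxt⟩ :=
      isCompact_Icc.tendsto_subseq (x := a) (fun p => Set.mem_Icc.mpr ⟨halow p, haup p⟩)
    have hxpos : 0 < x := lt_of_lt_of_le (half_pos hδpos) hxK.1
    have hγx : 0 < γ x := hγpos x hxpos
    have hev1 : ∀ᶠ k in atTop, γ x / 2 < γ (a (φ k)) :=
      hxt.eventually (hγlsc x (γ x / 2) (half_lt_self hγx))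
    have hev2 : ∀ᶠ k in atTop, γ (a (φ k)) < γ x / 2 := by
      have : Tendsto (fun k => γ (a (φ k))) atTop (𝓝 0) :=
        hγto0.comp hφ.tendsto_atTop
      exact this.eventually_lt_const (half_pos hγx)
    obtain ⟨k, h1, h2⟩ := (hev1.and hev2).exists
    linarith
  rw [hϖeq] at hconv
  refine ⟨hconv, ?_⟩
  rw [Metric.tendsto_atTop]
  intro ε hε
  have hυε : 0 < υ ε := by
    rcases (hυnn ε hε.le).lt_or_eq with h | h
    · exact h
    · exact absurd ((hυ0 ε hε.le).mp h.symm) hε.ne'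
  obtain ⟨N, hN⟩ := eventually_atTop.mp (hconv.eventually_lt_const hυε)
  refine ⟨N, fun n hn => ?_⟩
  rw [Real.dist_eq, sub_zero, abs_of_pos (ha n)]
  by_contra hc
  push_neg at hc
  exact absurd (hN n hn) (not_lt.mpr (hυmono hc))
end
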